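/- arXiv:2512.01984 — 3 statements merged into one kernel-verified Lean document; each statement's English description precedes it below -/
import Mathlib

section
/- Let k > 0, b > 0, and s ≥ √b. Define γ = 1/(1 + exp(k(s² − b))). Then γ·(s − √b) ≤ δ·√b, where δ = 1/(2kb + 2√(2kb)). -/
theorem gamma_times_excess_bound (k b s : ℝ) (hk : 0 < k) (hb : 0 < b)
    (hs : Real.sqrt b ≤ s) :
    let γ : ℝ := 1 / (1 + Real.exp (k * (s ^ 2 - b)))
    let δ : ℝ := 1 / (2 * k * b + 2 * Real.sqrt (2 * k * b))
    γ * (s - Real.sqrt b) ≤ δ * Real.sqrt b := by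
  intro γ δ
  set u := Real.sqrt b with hu
  have hu0 : 0 < u := Real.sqrt_pos.mpr hb
  have hu2 : u ^ 2 = b := Real.sq_sqrt hb.le
  set c := Real.sqrt (2 * k * b) with hc
  have hc0 : 0 < c := Real.sqrt_pos.mpr (by positivity)
  have hc2 : c ^ 2 = 2 * k * b := Real.sq_sqrt (by positivity)
  have ht : 0 ≤ s - u := sub_nonneg.mpr hs
  have hsu : (0:ℝ) ≤ s + u := by linarith
  have hx : 0 ≤ k * (s ^ 2 - b) := by nlinarith [mul_nonneg ht hsu]
  have hexp : 2 + k * (s ^ 2 - b) ≤ 1 + Real.exp (k * (s ^ 2 - b)) := by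
    have := Real.add_one_le_exp (k * (s ^ 2 - b))
    linarith
  have hd0 : 0 < 2 + k * (s ^ 2 - b) := by linarith
  have hd1 : 0 < 1 + Real.exp (k * (s ^ 2 - b)) := by positivity
  have hden : 0 < 2 * k * b + 2 * c := by positivity
  have h1 : γ * (s - u) ≤ (s - u) / (2 + k * (s ^ 2 - b)) := by
    have : γ * (s - u) = (s - u) / (1 + Real.exp (k * (s ^ 2 - b))) := by
      simp [γ, div_eq_mul_inv, mul_comm]
    rw [this]
    exact div_le_div_of_nonneg_left ht hd0 hexp
  have h2 : (s - u) / (2 + k * (s ^ 2 - b)) ≤ u / (2 * k * b + 2 * c) := by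
    rw [div_le_div_iff₀ hd0 hden]
    have hc2' : c ^ 2 = 2 * k * u ^ 2 := by rw [hc2, hu2]
    nlinarith [sq_nonneg (c * (s - u) - 2 * u), mul_pos hu0 hc0, mul_nonneg ht hc0.le,
      mul_nonneg (mul_nonneg ht ht) hu0.le, sq_nonneg (s - u), hu0.le, hc2', hu2]
  have h3 : δ * u = u / (2 * k * b + 2 * c) := by
    simp only [δ, hc]
    ring
  rw [h3]
  exact h1.trans h2
end

section
/- Let Q ∈ ℝ^{n×n} be symmetric positive definite with Cholesky factor L (Q = L·Lᵀ), w_c ∈ ℝⁿ, b > 0, k > 0, and ŵ ∈ ℝⁿ with ŵ ≠ w_c. Set V(w) = (w−w_c)ᵀQ(w−w_c), w̄ = w_c + √b·(Lᵀ)⁻¹(ŵ−w_c)/‖ŵ−w_c‖₂, γ = 1/(1 + exp(k(V(ŵ) − b))), and w* = γ·ŵ + (1−γ)·w̄. Then V(w*) ≤ (1+δ)²·b, where δ = 1/(2kb + 2√(2kb)). -/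
open Matrix


lemma quad_le_exp (x : ℝ) (hx : 0 ≤ x) : 1 + x + x^2/2 ≤ Real.exp x := by
  have := Real.quadratic_le_exp_of_nonneg hx
  linarith

set_option maxHeartbeats 1000000 in
lemma key_ineq (b k r : ℝ) (hb : 0 < b) (hk : 0 < k) (hr : 0 ≤ r) :
    (1/(1+Real.exp (k*(r^2-b)))) * r + (1 - 1/(1+Real.exp (k*(r^2-b)))) * Real.sqrt b
    ≤ (1 + 1/(2*k*b + 2*Real.sqrt (2*k*b))) * Real.sqrt b := by
  have hEpos : 0 < Real.exp (k*(r^2-b)) := Real.exp_pos _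
  set E := Real.exp (k*(r^2-b)) with hE
  have h1E : 0 < 1 + E := by linarith
  have hsbpos : 0 < Real.sqrt b := Real.sqrt_pos.mpr hb
  set sb := Real.sqrt b with hsb
  have hsbsq : sb^2 = b := Real.sq_sqrt hb.le
  have hSpos : 0 < Real.sqrt (2*k*b) := Real.sqrt_pos.mpr (by positivity)
  set S := Real.sqrt (2*k*b) with hS
  have hSsq : S^2 = 2*k*b := Real.sq_sqrt (by positivity)
  have hD : 0 < 2*k*b + 2*S := by positivity
  rcases le_or_gt r sb with hcase | hcase
  · have hγ1 : 1/(1+E) ≤ 1 := by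
      rw [div_le_one h1E]; linarith
    have hγ0 : 0 < 1/(1+E) := by positivity
    have hδ : 0 ≤ 1/(2*k*b+2*S) := by positivity
    nlinarith [mul_le_mul_of_nonneg_left hcase hγ0.le]
  · have htpos : 0 < r - sb := by linarith
    have hxval : k*(r^2 - b) = k*((r-sb)^2 + 2*sb*(r-sb)) := by
      rw [← hsbsq]; ring
    have hexp : 1 + k*(r^2-b) + (k*(r^2-b))^2/2 ≤ E :=
      quad_le_exp _ (by rw [hxval]; positivity)
    have hx2 : 4*k^2*b*(r-sb)^2 ≤ (k*(r^2-b))^2 := by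
      rw [hxval, ← hsbsq]
      nlinarith [sq_nonneg (k*(r-sb)), mul_pos hk htpos, mul_pos hsbpos htpos,
        mul_pos (mul_pos hk htpos) htpos, sq_nonneg (r-sb)]
    have amgm : 2*S*(r-sb) ≤ 2*sb + k*sb*(r-sb)^2 + 2*k^2*b*sb*(r-sb)^2 := by
      nlinarith [sq_nonneg (2*sb - S*(r-sb)), mul_pos hk hb,
        mul_pos (mul_pos (mul_pos hk hk) hb) (mul_pos hsbpos (mul_pos htpos htpos))]
    have hstep : sb * (2 + k*(r^2-b) + (k*(r^2-b))^2/2) ≤ sb * (1+E) :=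
      mul_le_mul_of_nonneg_left (by linarith) hsbpos.le
    have hx2sb : sb * (4*k^2*b*(r-sb)^2) ≤ sb * (k*(r^2-b))^2 :=
      mul_le_mul_of_nonneg_left hx2 hsbpos.le
    have hlin : sb * (k*(r^2-b)) = k*sb*(r-sb)^2 + 2*k*b*(r-sb) := by
      rw [hxval]; linear_combination (2*k*(r-sb)) * hsbsq
    have hcore : (r-sb) * (2*k*b + 2*S) ≤ sb * (1 + E) := by
      nlinarith [hstep, hx2sb, amgm, hlin]
    have hmain : (1/(1+E)) * (r-sb) ≤ (1/(2*k*b+2*S)) * sb := by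
      rw [div_mul_eq_mul_div, div_mul_eq_mul_div, div_le_div_iff₀ h1E hD]
      nlinarith [hcore]
    nlinarith [hmain]


lemma norm_symm_eq {n : ℕ} (y : Fin n → ℝ) :
    ‖(WithLp.equiv 2 (Fin n → ℝ)).symm y‖ = Real.sqrt (y ⬝ᵥ y) := by
  rw [EuclideanSpace.norm_eq]
  congr 1
  simp [dotProduct, Real.norm_eq_abs, sq_abs, sq]

lemma dot_LLT {n : ℕ} (L : Matrix (Fin n) (Fin n) ℝ) (v : Fin n → ℝ) :
    v ⬝ᵥ (L * Lᵀ) *ᵥ v = (Lᵀ *ᵥ v) ⬝ᵥ (Lᵀ *ᵥ v) := by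
  rw [← mulVec_mulVec, dotProduct_mulVec, ← mulVec_transpose]

lemma dot_self_nonneg' {n : ℕ} (v : Fin n → ℝ) : 0 ≤ v ⬝ᵥ v :=
  Finset.sum_nonneg fun _ _ => mul_self_nonneg _

theorem sigmoid_relaxed_projection_bound (n : ℕ)
    (Q L : Matrix (Fin n) (Fin n) ℝ) (hQ : Q.PosDef)
    (hL : Q = L * Lᵀ) (hLinv : IsUnit L.det)
    (wc what : EuclideanSpace ℝ (Fin n)) (b k : ℝ) (hb : 0 < b) (hk : 0 < k)
    (hne : what ≠ wc) :
    let V : EuclideanSpace ℝ (Fin n) → ℝ :=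
      fun w => (WithLp.equiv 2 (Fin n → ℝ)) (w - wc) ⬝ᵥ Q *ᵥ (WithLp.equiv 2 (Fin n → ℝ)) (w - wc)
    let wbar : EuclideanSpace ℝ (Fin n) :=
      wc + Real.sqrt b • (WithLp.equiv 2 (Fin n → ℝ)).symm
        ((Lᵀ)⁻¹ *ᵥ (WithLp.equiv 2 (Fin n → ℝ)) (‖what - wc‖⁻¹ • (what - wc)))
    let γ : ℝ := 1 / (1 + Real.exp (k * (V what - b)))
    let wstar : EuclideanSpace ℝ (Fin n) := γ • what + (1 - γ) • wbar
    let δ : ℝ := 1 / (2 * k * b + 2 * Real.sqrt (2 * k * b))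
    V wstar ≤ (1 + δ) ^ 2 * b := by
  intro V wbar γ wstar δ
  set e := WithLp.equiv 2 (Fin n → ℝ) with he
  set x : Fin n → ℝ := e (what - wc) with hx
  set u : Fin n → ℝ := e (‖what - wc‖⁻¹ • (what - wc)) with hu
  -- wstar - wc
  have hwstar : wstar - wc = γ • (what - wc)
      + ((1 - γ) * Real.sqrt b) • e.symm ((Lᵀ)⁻¹ *ᵥ u) := by
    show γ • what + (1 - γ) • (wc + Real.sqrt b • e.symm ((Lᵀ)⁻¹ *ᵥ u)) - wc = _
    module
  have hz : e (wstar - wc) = γ • x + ((1 - γ) * Real.sqrt b) • ((Lᵀ)⁻¹ *ᵥ u) := by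
    rw [hwstar]; rfl
  have hLT : Lᵀ *ᵥ ((Lᵀ)⁻¹ *ᵥ u) = u := by
    rw [mulVec_mulVec, Matrix.mul_nonsing_inv _ (by rwa [det_transpose]), one_mulVec]
  have hLz : Lᵀ *ᵥ (e (wstar - wc)) = γ • (Lᵀ *ᵥ x) + ((1 - γ) * Real.sqrt b) • u := by
    rw [hz, mulVec_add, mulVec_smul, mulVec_smul, hLT]
  -- V in terms of norms
  have hVnorm : ∀ w : EuclideanSpace ℝ (Fin n),
      V w = ‖e.symm (Lᵀ *ᵥ (e (w - wc)))‖ ^ 2 := by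
    intro w
    have := norm_symm_eq (Lᵀ *ᵥ (e (w - wc)))
    rw [this, Real.sq_sqrt (dot_self_nonneg' _)]
    show (e (w - wc)) ⬝ᵥ Q *ᵥ (e (w - wc)) = _
    rw [hL, dot_LLT]
  set r : ℝ := ‖e.symm (Lᵀ *ᵥ x)‖ with hr
  have hVwhat : V what = r ^ 2 := hVnorm what
  -- e.symm u has norm 1
  have hnu : ‖e.symm u‖ = 1 := by
    rw [hu, Equiv.symm_apply_apply, norm_smul, norm_inv, norm_norm]
    exact inv_mul_cancel₀ (norm_ne_zero_iff.mpr (sub_ne_zero.mpr hne))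
  -- triangle inequality
  have hwnorm : ‖e.symm (Lᵀ *ᵥ (e (wstar - wc)))‖ ≤ γ * r + (1 - γ) * Real.sqrt b := by
    have hγ0 : 0 ≤ γ := by
      have := Real.exp_pos (k * (V what - b)); positivity
    have hγ1 : γ ≤ 1 := by
      have h1 : (0:ℝ) < 1 + Real.exp (k * (V what - b)) := by
        have := Real.exp_pos (k * (V what - b)); linarith
      rw [show γ = 1 / (1 + Real.exp (k * (V what - b))) from rfl, div_le_one h1]
      have := Real.exp_pos (k * (V what - b)); linarith
    have hdec : e.symm (Lᵀ *ᵥ (e (wstar - wc)))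
        = γ • (e.symm (Lᵀ *ᵥ x)) + ((1 - γ) * Real.sqrt b) • (e.symm u) := by
      rw [hLz]; rfl
    rw [hdec]
    calc ‖γ • (e.symm (Lᵀ *ᵥ x)) + ((1 - γ) * Real.sqrt b) • (e.symm u)‖
        ≤ ‖γ • (e.symm (Lᵀ *ᵥ x))‖ + ‖((1 - γ) * Real.sqrt b) • (e.symm u)‖ :=
          norm_add_le _ _
      _ = γ * r + (1 - γ) * Real.sqrt b := by
          rw [norm_smul, norm_smul, hnu, Real.norm_eq_abs, Real.norm_eq_abs,
            abs_of_nonneg hγ0, abs_of_nonneg (mul_nonneg (by linarith) (Real.sqrt_nonneg b))]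
          ring
  -- key analytic inequality
  have hrnn : (0:ℝ) ≤ r := norm_nonneg _
  have hkey := key_ineq b k r hb hk hrnn
  have hγeq : γ = 1 / (1 + Real.exp (k * (r ^ 2 - b))) := by
    rw [show γ = 1 / (1 + Real.exp (k * (V what - b))) from rfl, hVwhat]
  have hbound : ‖e.symm (Lᵀ *ᵥ (e (wstar - wc)))‖ ≤ (1 + δ) * Real.sqrt b := by
    calc ‖e.symm (Lᵀ *ᵥ (e (wstar - wc)))‖ ≤ γ * r + (1 - γ) * Real.sqrt b := hwnorm
      _ ≤ (1 + δ) * Real.sqrt b := by rw [hγeq]; exact hkey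
  have := hVnorm wstar
  rw [this]
  calc ‖e.symm (Lᵀ *ᵥ (e (wstar - wc)))‖ ^ 2 ≤ ((1 + δ) * Real.sqrt b) ^ 2 := by
        apply pow_le_pow_left₀ (norm_nonneg _) hbound
    _ = (1 + δ) ^ 2 * b := by
        rw [mul_pow, Real.sq_sqrt hb.le]
end

section
/- Let G : ℝⁿ → ℝⁿ, V(w) = (w−w_c)ᵀQ(w−w_c) with Q symmetric positive definite, c > 0, α ∈ (0,1), and suppose V(G(w)) ≤ α·[V(w) + max(c − V(w), 0)] for all w. Then every trajectory w_t = G^t(w_0) is bounded in Euclidean norm, and the set M(c) = {w : V(w) ≤ c} is globally attracting: dist(w_t, M(c)) → 0 as t → ∞. -/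
open Matrix

lemma quad_coercive {n : ℕ} {Q : Matrix (Fin n) (Fin n) ℝ} (hQ : Q.PosDef) :
    ∃ ε > 0, ∀ x : EuclideanSpace ℝ (Fin n),
      ε * ‖x‖ ^ 2 ≤ (WithLp.equiv 2 (Fin n → ℝ)) x ⬝ᵥ Q *ᵥ (WithLp.equiv 2 (Fin n → ℝ)) x := by
  classical
  set f : EuclideanSpace ℝ (Fin n) → ℝ :=
    fun x => (WithLp.equiv 2 (Fin n → ℝ)) x ⬝ᵥ Q *ᵥ (WithLp.equiv 2 (Fin n → ℝ)) x with hf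
  have hfc : Continuous f := by
    have : f = fun x : EuclideanSpace ℝ (Fin n) =>
        ∑ i, x i * ∑ j, Q i j * x j := by
      funext x
      rfl
    rw [this]
    exact continuous_finset_sum _ fun i _ =>
      ((PiLp.proj (𝕜 := ℝ) 2 (fun _ : Fin n => ℝ) i).continuous).mul
        (continuous_finset_sum _ fun j _ =>
          continuous_const.mul (PiLp.proj (𝕜 := ℝ) 2 (fun _ : Fin n => ℝ) j).continuous)
  have homog : ∀ (s : ℝ) (x : EuclideanSpace ℝ (Fin n)), f (s • x) = s ^ 2 * f x := by
    intro s x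
    simp only [hf, WithLp.equiv_apply, WithLp.ofLp_smul, smul_dotProduct, mulVec_smul, dotProduct_smul,
      smul_eq_mul]
    ring
  have hpos : ∀ x : EuclideanSpace ℝ (Fin n), x ≠ 0 → 0 < f x := by
    intro x hx
    have hx' : (WithLp.equiv 2 (Fin n → ℝ)) x ≠ 0 := by
      simpa using hx
    simpa [hf] using hQ.dotProduct_mulVec_pos hx'
  rcases eq_or_ne n 0 with hn | hn
  · subst hn
    refine ⟨1, one_pos, fun x => ?_⟩
    have : x = 0 := Subsingleton.elim x 0
    subst this
    simp [hf]
  · have : 0 < n := Nat.pos_of_ne_zero hn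
    haveI : Nonempty (Fin n) := ⟨⟨0, this⟩⟩
    have hne : (Metric.sphere (0 : EuclideanSpace ℝ (Fin n)) 1).Nonempty :=
      NormedSpace.sphere_nonempty.mpr zero_le_one
    obtain ⟨x₀, hx₀S, hmin⟩ :=
      (isCompact_sphere (0 : EuclideanSpace ℝ (Fin n)) 1).exists_isMinOn hne hfc.continuousOn
    have hx₀norm : ‖x₀‖ = 1 := by simpa using hx₀S
    have hx₀ne : x₀ ≠ 0 := by
      intro h; rw [h] at hx₀norm; simp at hx₀norm
    refine ⟨f x₀, hpos x₀ hx₀ne, fun x => ?_⟩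
    rcases eq_or_ne x 0 with rfl | hx
    · simp [hf]
    · have hxn : 0 < ‖x‖ := norm_pos_iff.mpr hx
      set u : EuclideanSpace ℝ (Fin n) := ‖x‖⁻¹ • x with hu
      have hun : ‖u‖ = 1 := by
        rw [hu, norm_smul]
        simp [abs_of_nonneg (inv_nonneg.mpr hxn.le), inv_mul_cancel₀ hxn.ne']
      have huS : u ∈ Metric.sphere (0 : EuclideanSpace ℝ (Fin n)) 1 :=
        mem_sphere_zero_iff_norm.mpr hun
      have h1 : f x₀ ≤ f u := hmin huS
      have h2 : f u = f x / ‖x‖ ^ 2 := by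
        rw [hu, homog]
        field_simp
      rw [h2, le_div_iff₀ (by positivity)] at h1
      linarith

theorem dissipative_traj_bounded_and_attracting (n : ℕ)
    (G : EuclideanSpace ℝ (Fin n) → EuclideanSpace ℝ (Fin n))
    (Q : Matrix (Fin n) (Fin n) ℝ) (hQ : Q.PosDef)
    (wc : EuclideanSpace ℝ (Fin n)) (c α : ℝ)
    (hc : 0 < c) (hα0 : 0 < α) (hα1 : α < 1)
    (V : EuclideanSpace ℝ (Fin n) → ℝ)
    (hV : V = fun w =>
      (WithLp.equiv 2 (Fin n → ℝ)) (w - wc) ⬝ᵥ Q *ᵥ (WithLp.equiv 2 (Fin n → ℝ)) (w - wc))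
    (hdiss : ∀ w, V (G w) ≤ α * (V w + max (c - V w) 0)) :
    ∀ w0 : EuclideanSpace ℝ (Fin n),
      (∃ B : ℝ, ∀ t : ℕ, ‖G^[t] w0‖ ≤ B) ∧
      Filter.Tendsto (fun t : ℕ => Metric.infDist (G^[t] w0) {w | V w ≤ c})
        Filter.atTop (nhds 0) := by
  obtain ⟨ε, hε, hcoer⟩ := quad_coercive hQ
  -- homogeneity of V around wc
  have homog : ∀ (s : ℝ) (w : EuclideanSpace ℝ (Fin n)),
      V (wc + s • (w - wc)) = s ^ 2 * V w := by
    intro s w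
    have h1 : (wc + s • (w - wc)) - wc = s • (w - wc) := by abel
    simp only [hV, h1, WithLp.equiv_apply, WithLp.ofLp_smul, smul_dotProduct, mulVec_smul, dotProduct_smul,
      smul_eq_mul]
    ring
  have hcoerV : ∀ w, ε * ‖w - wc‖ ^ 2 ≤ V w := by
    intro w; rw [hV]; exact hcoer _
  have hV0 : ∀ w, 0 ≤ V w := fun w => le_trans (by positivity) (hcoerV w)
  intro w0
  set w : ℕ → EuclideanSpace ℝ (Fin n) := fun t => G^[t] w0 with hw
  set v : ℕ → ℝ := fun t => V (w t) with hv
  set u : ℕ → ℝ := fun t => max (v t) c with hu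
  have huc : ∀ t, c ≤ u t := fun t => le_max_right _ _
  have hu0pos : 0 < u 0 := lt_of_lt_of_le hc (huc 0)
  have hvu : ∀ t, v t ≤ u t := fun t => le_max_left _ _
  have hstep : ∀ t, v (t + 1) ≤ α * u t := by
    intro t
    have h1 : v (t + 1) = V (G (w t)) := by
      simp only [hv, hw, Function.iterate_succ_apply']
    have h2 : v t + max (c - v t) 0 = u t := by
      simp only [hu]
      rcases le_total (v t) c with h | h
      · rw [max_eq_left (sub_nonneg.mpr h), max_eq_right h]; ring
      · rw [max_eq_right (sub_nonpos.mpr h), max_eq_left h]; ring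
    rw [h1, ← h2]
    exact hdiss (w t)
  have hu_step : ∀ t, u (t + 1) ≤ max (α * u t) c :=
    fun t => max_le_max (hstep t) le_rfl
  have hαc : α * c ≤ c := by nlinarith
  have hu_bound : ∀ t, u t ≤ max (α ^ t * u 0) c := by
    intro t
    induction t with
    | zero => simp
    | succ t ih =>
      refine le_trans (hu_step t) ?_
      have h1 : α * u t ≤ α * max (α ^ t * u 0) c :=
        mul_le_mul_of_nonneg_left ih hα0.le
      have h2 : α * max (α ^ t * u 0) c = max (α ^ (t + 1) * u 0) (α * c) := by
        rw [mul_max_of_nonneg _ _ hα0.le]; ring_nf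
      calc max (α * u t) c ≤ max (max (α ^ (t + 1) * u 0) (α * c)) c := by
            apply max_le_max _ le_rfl; rw [← h2]; exact h1
        _ = max (α ^ (t + 1) * u 0) (max (α * c) c) := max_assoc _ _ _
        _ = max (α ^ (t + 1) * u 0) c := by rw [max_eq_right hαc]
  have hut_le : ∀ t, u t ≤ u 0 := by
    intro t
    refine le_trans (hu_bound t) (max_le ?_ (huc 0))
    have : α ^ t ≤ 1 := pow_le_one₀ hα0.le hα1.le
    nlinarith
  set R : ℝ := Real.sqrt (u 0 / ε) with hR
  have hnormle : ∀ t, ‖w t - wc‖ ≤ R := by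
    intro t
    have h2 : ‖w t - wc‖ ^ 2 ≤ u 0 / ε := by
      rw [le_div_iff₀ hε]
      calc ‖w t - wc‖ ^ 2 * ε = ε * ‖w t - wc‖ ^ 2 := by ring
        _ ≤ v t := hcoerV (w t)
        _ ≤ u t := hvu t
        _ ≤ u 0 := hut_le t
    calc ‖w t - wc‖ = Real.sqrt (‖w t - wc‖ ^ 2) := (Real.sqrt_sq (norm_nonneg _)).symm
      _ ≤ R := Real.sqrt_le_sqrt h2
  constructor
  · refine ⟨‖wc‖ + R, fun t => ?_⟩
    have h1 := norm_sub_norm_le (w t) wc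
    have := hnormle t
    calc ‖G^[t] w0‖ = ‖w t‖ := rfl
      _ ≤ ‖wc‖ + ‖w t - wc‖ := by linarith
      _ ≤ ‖wc‖ + R := by linarith
  · -- u t → c
    have hu_tendsto : Filter.Tendsto u Filter.atTop (nhds c) := by
      have hupper : Filter.Tendsto (fun t => max (α ^ t * u 0) c) Filter.atTop (nhds c) := by
        have h1 : Filter.Tendsto (fun t : ℕ => α ^ t * u 0) Filter.atTop (nhds 0) := by
          have := tendsto_pow_atTop_nhds_zero_of_lt_one hα0.le hα1
          simpa using this.mul_const (u 0)
        have h2 := h1.max (tendsto_const_nhds :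
          Filter.Tendsto (fun _ : ℕ => c) Filter.atTop (nhds c))
        simpa [max_eq_right hc.le] using h2
      exact tendsto_of_tendsto_of_tendsto_of_le_of_le
        (tendsto_const_nhds) hupper huc hu_bound
    -- distance bound
    have hdistle : ∀ t, Metric.infDist (w t) {w | V w ≤ c}
        ≤ (1 - Real.sqrt (c / u t)) * R := by
      intro t
      have hut : 0 < u t := lt_of_lt_of_le hc (huc t)
      set s : ℝ := Real.sqrt (c / u t) with hs
      have hs0 : 0 ≤ s := Real.sqrt_nonneg _
      have hs1 : s ≤ 1 := by
        have h : c / u t ≤ 1 := by rw [div_le_one hut]; exact huc t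
        calc s ≤ Real.sqrt 1 := Real.sqrt_le_sqrt h
          _ = 1 := Real.sqrt_one
      set y : EuclideanSpace ℝ (Fin n) := wc + s • (w t - wc) with hy
      have hyS : y ∈ {w | V w ≤ c} := by
        have h1 : V y = s ^ 2 * v t := homog s (w t)
        have h2 : s ^ 2 = c / u t := Real.sq_sqrt (by positivity)
        rw [Set.mem_setOf_eq, h1, h2]
        calc c / u t * v t ≤ c / u t * u t := by
              apply mul_le_mul_of_nonneg_left (hvu t) (by positivity)
          _ = c := div_mul_cancel₀ c hut.ne'
      have hwy : w t - y = (1 - s) • (w t - wc) := by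
        rw [hy, sub_smul, one_smul]
        abel
      calc Metric.infDist (w t) {w | V w ≤ c} ≤ dist (w t) y :=
            Metric.infDist_le_dist_of_mem hyS
        _ = ‖w t - y‖ := dist_eq_norm _ _
        _ = (1 - s) * ‖w t - wc‖ := by
            rw [hwy, norm_smul, Real.norm_eq_abs, abs_of_nonneg (by linarith)]
        _ ≤ (1 - s) * R := by
            apply mul_le_mul_of_nonneg_left (hnormle t) (by linarith)
    -- RHS tends to 0
    have hRHS : Filter.Tendsto (fun t => (1 - Real.sqrt (c / u t)) * R)
        Filter.atTop (nhds 0) := by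
      have h1 : Filter.Tendsto (fun t => c / u t) Filter.atTop (nhds 1) := by
        have := (tendsto_const_nhds (x := c) (f := Filter.atTop (α := ℕ))).div
          hu_tendsto hc.ne'
        simpa [div_self hc.ne', Pi.div_def] using this
      have h2 : Filter.Tendsto (fun t => Real.sqrt (c / u t)) Filter.atTop (nhds 1) := by
        have := (Real.continuous_sqrt.tendsto 1).comp h1
        simpa [Function.comp_def] using this
      have h3 := ((tendsto_const_nhds (x := (1:ℝ))).sub h2).mul_const R
      simpa using h3
    refine tendsto_of_tendsto_of_tendsto_of_le_of_le tendsto_const_nhds hRHS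
      (fun t => Metric.infDist_nonneg) hdistle
end
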